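/- arXiv:2212.14489 — 4 statements merged into one kernel-verified Lean document; each statement's English description precedes it below -/
import Mathlib

section
/- Let a ∈ ℝ and let w, c be real numbers with 0 < w < c. Let f₀ be the two-bump initial density with parameters a, c, w, and for y ≥ 0 define the kernel k(y) = ∫₀^{y/2} [ f₀(a−y+x) f₀(a+x) − f₀(a−y−x) f₀(a−x) ] dx. Then for every y ≥ 0 one has k(y) = (1/(4w)) · h_{2c,w}(y), i.e. the kernel is a positive multiple of the triangular hat function of height 1 centered at y = 2c with base half-width w. -/
open MeasureTheory Set

/-- The triangular hat function `h_{p,w}(y) = max{1 - |y - p|/w, 0}`. -/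
noncomputable def hat (p w y : ℝ) : ℝ := max (1 - |y - p| / w) 0

/-- The two-bump initial density with parameters `a`, `c`, `w`. -/
noncomputable def twoBump (a c w x : ℝ) : ℝ :=
  (1 / (2 * w)) * ((Set.Ioo (a - c - w) (a - c)).indicator 1 x
    + (Set.Ioo (a + c - w) (a + c)).indicator 1 x)

/-!
For `0 ≤ x ≤ y/2` the points `a - y - x` and `a - x` both lie left of `a`, and both can only
meet the left bump if `c < x < c + w - y`, which `x ≤ y/2` and `w < c` rule out; so the
second product in the kernel vanishes. The first product is `(2w)⁻²` times the indicator of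
the overlap of `(y - c - w, y - c)` and `(c - w, c)`, two intervals of width `w` whose right
ends are `|y - 2c|` apart. This overlap lies in `(0, y/2)` and has length
`max (w - |y - 2c|) 0`, which is `w · hat (2c) w y`.
-/

lemma indicator_one_congr {α β M : Type*} [One M] [Zero M] {s : Set α} {t : Set β} {x : α}
    {x' : β} (h : x ∈ s ↔ x' ∈ t) : s.indicator (1 : α → M) x = t.indicator 1 x' := by
  classical
  simp only [indicator_apply, h, Pi.one_apply]

lemma hat_eq_max_div {p w : ℝ} (hw : 0 < w) (y : ℝ) :
    hat p w y = max (w - |y - p|) 0 / w := by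
  rw [hat, ← max_div_div_right hw.le, zero_div, sub_div, div_self hw.ne']

lemma volume_real_Ioo_inter_Ioo_sub (s t w : ℝ) :
    volume.real (Ioo (s - w) s ∩ Ioo (t - w) t) = max (w - |s - t|) 0 := by
  rw [Ioo_inter_Ioo, Real.volume_real_Ioo, max_sub_sub_right, ← max_sub_min_eq_abs']
  congr 1
  ring

lemma intervalIntegral_indicator_one_of_subset {a b : ℝ} (hab : a ≤ b) {s : Set ℝ}
    (hs : MeasurableSet s) (hsub : s ⊆ Ioc a b) :
    ∫ x in a..b, s.indicator 1 x = volume.real s := by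
  rw [intervalIntegral.integral_of_le hab, integral_indicator_one hs,
    measureReal_restrict_apply hs, inter_eq_self_of_subset_left hsub]

namespace twoBump

variable {a c w x : ℝ}

lemma eq_of_le (hwc : w ≤ c) (hx : x ≤ a) :
    twoBump a c w x = (1 / (2 * w)) * (Ioo (a - c - w) (a - c)).indicator 1 x := by
  have hright : x ∉ Ioo (a + c - w) (a + c) := fun h ↦ by linarith [h.1]
  rw [twoBump, indicator_of_notMem hright, add_zero]

lemma eq_of_ge (hc : 0 ≤ c) (hx : a ≤ x) :
    twoBump a c w x = (1 / (2 * w)) * (Ioo (a + c - w) (a + c)).indicator 1 x := by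
  have hleft : x ∉ Ioo (a - c - w) (a - c) := fun h ↦ by linarith [h.2]
  rw [twoBump, indicator_of_notMem hleft, zero_add]

lemma kernel_integrand_eq (hw : 0 < w) (hwc : w < c) {y : ℝ} (hx : 0 ≤ x) (hxy : x ≤ y / 2) :
    twoBump a c w (a - y + x) * twoBump a c w (a + x)
        - twoBump a c w (a - y - x) * twoBump a c w (a - x)
      = (1 / (2 * w)) ^ 2 * (Ioo (y - c - w) (y - c) ∩ Ioo (c - w) c).indicator 1 x := by
  rw [eq_of_le hwc.le (by linarith), eq_of_ge (by linarith) (by linarith),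
    eq_of_le hwc.le (by linarith), eq_of_le hwc.le (by linarith), inter_indicator_one]
  have hshift : (Ioo (a - c - w) (a - c)).indicator (1 : ℝ → ℝ) (a - y + x)
      = (Ioo (y - c - w) (y - c)).indicator 1 x :=
    indicator_one_congr ⟨fun h ↦ ⟨by linarith [h.1], by linarith [h.2]⟩,
      fun h ↦ ⟨by linarith [h.1], by linarith [h.2]⟩⟩
  have hright : (Ioo (a + c - w) (a + c)).indicator (1 : ℝ → ℝ) (a + x)
      = (Ioo (c - w) c).indicator 1 x :=
    indicator_one_congr ⟨fun h ↦ ⟨by linarith [h.1], by linarith [h.2]⟩,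
      fun h ↦ ⟨by linarith [h.1], by linarith [h.2]⟩⟩
  have hreflected : (Ioo (a - c - w) (a - c)).indicator (1 : ℝ → ℝ) (a - y - x)
      * (Ioo (a - c - w) (a - c)).indicator 1 (a - x) = 0 := by
    by_cases h : a - x ∈ Ioo (a - c - w) (a - c)
    · have h' : a - y - x ∉ Ioo (a - c - w) (a - c) := fun h' ↦ by linarith [h.2, h'.1]
      rw [indicator_of_notMem h', zero_mul]
    · rw [indicator_of_notMem h, mul_zero]
  rw [hshift, hright, Pi.mul_apply]
  linear_combination -(1 / (2 * w)) ^ 2 * hreflected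

end twoBump

theorem stmt0 (a w c : ℝ) (hw : 0 < w) (hwc : w < c) (y : ℝ) (hy : 0 ≤ y) :
    (∫ x in (0:ℝ)..(y / 2),
        (twoBump a c w (a - y + x) * twoBump a c w (a + x)
          - twoBump a c w (a - y - x) * twoBump a c w (a - x)))
      = (1 / (4 * w)) * hat (2 * c) w y := by
  have hy2 : 0 ≤ y / 2 := by linarith
  have hoverlap : Ioo (y - c - w) (y - c) ∩ Ioo (c - w) c ⊆ Ioc 0 (y / 2) :=
    fun x ⟨h₁, h₂⟩ ↦ ⟨by linarith [h₂.1], by linarith [h₁.2, h₂.2]⟩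
  rw [intervalIntegral.integral_congr fun x hx ↦
      twoBump.kernel_integrand_eq hw hwc (uIcc_of_le hy2 ▸ hx).1 (uIcc_of_le hy2 ▸ hx).2,
    intervalIntegral.integral_const_mul,
    intervalIntegral_indicator_one_of_subset hy2 (measurableSet_Ioo.inter measurableSet_Ioo)
      hoverlap,
    volume_real_Ioo_inter_Ioo_sub, hat_eq_max_div hw, show y - c - c = y - 2 * c by ring]
  field_simp
  ring
end

section
/- Let θ : ℝ → ℝ be bounded, measurable, and even, let f : ℝ → ℝ be nonnegative and Lebesgue integrable, and let g : ℝ → ℝ be bounded and measurable. Then both of the following integrals converge absolutely and are equal: ∫∫_{ℝ²} θ(x₁−x₂) f(x₁) f(x₂) [ 2 g((x₁+x₂)/2) − g(x₁) − g(x₂) ] dx₁ dx₂ = ∫₀^∞ ∫_ℝ 2 θ(r) f(y) f(r+y) [ 2 g(y + r/2) − g(y) − g(r+y) ] dy dr. -/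
open MeasureTheory Set

theorem stmt2 (θ f g : ℝ → ℝ)
    (hθm : Measurable θ) (hθb : ∃ K, ∀ r, |θ r| ≤ K) (hθe : ∀ r, θ (-r) = θ r)
    (hf : ∀ x, 0 ≤ f x) (hfi : Integrable f)
    (hgm : Measurable g) (hgb : ∃ K, ∀ x, |g x| ≤ K) :
    Integrable (fun p : ℝ × ℝ =>
        θ (p.1 - p.2) * f p.1 * f p.2 * (2 * g ((p.1 + p.2) / 2) - g p.1 - g p.2)) ∧
    IntegrableOn (fun q : ℝ × ℝ =>
        2 * θ q.1 * f q.2 * f (q.1 + q.2) * (2 * g (q.2 + q.1 / 2) - g q.2 - g (q.1 + q.2)))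
      (Set.Ioi (0:ℝ) ×ˢ Set.univ) ∧
    (∫ p : ℝ × ℝ,
        θ (p.1 - p.2) * f p.1 * f p.2 * (2 * g ((p.1 + p.2) / 2) - g p.1 - g p.2))
      = ∫ r in Set.Ioi (0:ℝ), ∫ y : ℝ,
          2 * θ r * f y * f (r + y) * (2 * g (y + r / 2) - g y - g (r + y)) := by
  obtain ⟨K, hK⟩ := hθb
  obtain ⟨D, hD⟩ := hgb
  set G : ℝ × ℝ → ℝ := fun p =>
    θ (p.1 - p.2) * f p.1 * f p.2 * (2 * g ((p.1 + p.2) / 2) - g p.1 - g p.2) with hGdef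
  set F : ℝ → ℝ → ℝ := fun r y =>
    θ r * f (r + y) * f y * (2 * g (y + r / 2) - g (r + y) - g y) with hFdef
  -- Step A: integrability of G
  have hfae := hfi.aestronglyMeasurable
  have h1 : AEStronglyMeasurable (fun p : ℝ × ℝ => f p.1) (volume : Measure (ℝ × ℝ)) := by
    rw [Measure.volume_eq_prod]
    exact hfae.comp_quasiMeasurePreserving Measure.quasiMeasurePreserving_fst
  have h2 : AEStronglyMeasurable (fun p : ℝ × ℝ => f p.2) (volume : Measure (ℝ × ℝ)) := by
    rw [Measure.volume_eq_prod]
    exact hfae.comp_quasiMeasurePreserving Measure.quasiMeasurePreserving_snd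
  have hg3 : Measurable (fun p : ℝ × ℝ => 2 * g ((p.1 + p.2) / 2) - g p.1 - g p.2) :=
    ((measurable_const.mul (hgm.comp ((measurable_fst.add measurable_snd).div_const 2))).sub
      (hgm.comp measurable_fst)).sub (hgm.comp measurable_snd)
  have hGm : AEStronglyMeasurable G (volume : Measure (ℝ × ℝ)) :=
    (((hθm.comp (measurable_fst.sub measurable_snd)).aestronglyMeasurable.mul h1).mul h2).mul
      hg3.aestronglyMeasurable
  have hBi : Integrable (fun p : ℝ × ℝ => K * (4 * D) * (f p.1 * f p.2))
      (volume : Measure (ℝ × ℝ)) := by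
    rw [Measure.volume_eq_prod]
    exact (hfi.mul_prod hfi).const_mul _
  have hG : Integrable G (volume : Measure (ℝ × ℝ)) := by
    refine hBi.mono' hGm (Filter.Eventually.of_forall fun p => ?_)
    have hgg : |2 * g ((p.1 + p.2) / 2) - g p.1 - g p.2| ≤ 4 * D := by
      have h1 := hD ((p.1 + p.2) / 2); have h2 := hD p.1; have h3 := hD p.2
      rw [abs_le] at h1 h2 h3 ⊢; constructor <;> [linarith; linarith]
    have hK0 : 0 ≤ K := le_trans (abs_nonneg _) (hK 0)
    have hD4 : (0:ℝ) ≤ 4 * D := le_trans (abs_nonneg _) hgg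
    calc ‖G p‖ = |θ (p.1 - p.2)| * f p.1 * f p.2 *
          |2 * g ((p.1 + p.2) / 2) - g p.1 - g p.2| := by
          simp only [hGdef, Real.norm_eq_abs, abs_mul, abs_of_nonneg (hf _)]
      _ ≤ K * f p.1 * f p.2 * (4 * D) := by
          have := hf p.1; have := hf p.2
          have h5 : |θ (p.1 - p.2)| * f p.1 * f p.2 ≤ K * f p.1 * f p.2 := by
            apply mul_le_mul_of_nonneg_right _ (hf p.2)
            exact mul_le_mul_of_nonneg_right (hK _) (hf p.1)
          exact mul_le_mul h5 hgg (abs_nonneg _) (by positivity)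
      _ = K * (4 * D) * (f p.1 * f p.2) := by ring
  -- Step B: change of variables via the shear (r, y) ↦ (r + y, y)
  have hemb : MeasurableEmbedding (fun z : ℝ × ℝ => (z.1 + z.2, z.2)) := by
    exact (Homeomorph.mk
      { toFun := fun z : ℝ × ℝ => (z.1 + z.2, z.2)
        invFun := fun z : ℝ × ℝ => (z.1 - z.2, z.2)
        left_inv := fun z => by simp
        right_inv := fun z => by simp }
      (by fun_prop) (by fun_prop)).measurableEmbedding
  have hmp : MeasurePreserving (fun z : ℝ × ℝ => (z.1 + z.2, z.2))
      (volume : Measure (ℝ × ℝ)) (volume : Measure (ℝ × ℝ)) := by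
    rw [Measure.volume_eq_prod]; exact measurePreserving_add_prod volume volume
  have hcomp : (fun z : ℝ × ℝ => G (z.1 + z.2, z.2)) = fun z : ℝ × ℝ => F z.1 z.2 := by
    funext z
    simp only [hGdef, hFdef]
    rw [show z.1 + z.2 - z.2 = z.1 by ring, show (z.1 + z.2 + z.2) / 2 = z.2 + z.1 / 2 by ring]
  have hF : Integrable (fun z : ℝ × ℝ => F z.1 z.2) (volume : Measure (ℝ × ℝ)) := by
    rw [← hcomp]
    exact (hmp.integrable_comp_emb hemb).mpr hG
  have hint : (∫ p : ℝ × ℝ, G p) = ∫ z : ℝ × ℝ, F z.1 z.2 := by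
    rw [← hcomp]
    exact (hmp.integral_comp hemb G).symm
  -- Fubini
  set φ : ℝ → ℝ := fun r => ∫ y : ℝ, F r y with hφdef
  have hFprod : Integrable (fun z : ℝ × ℝ => F z.1 z.2)
      ((volume : Measure ℝ).prod (volume : Measure ℝ)) := by rw [← Measure.volume_eq_prod]; exact hF
  have hφi : Integrable φ (volume : Measure ℝ) := hFprod.integral_prod_left
  have hfub : (∫ z : ℝ × ℝ, F z.1 z.2) = ∫ r : ℝ, φ r := by
    rw [Measure.volume_eq_prod, integral_prod _ hFprod]
  -- evenness of φ
  have hφeven : ∀ r, φ (-r) = φ r := by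
    intro r
    have key : (fun y => F (-r) (y + r)) = fun y => F r y := by
      funext y
      simp only [hFdef]
      rw [show -r + (y + r) = y by ring, hθe r, show y + r + -r / 2 = y + r / 2 by ring,
        show r + y = y + r by ring]
      ring
    calc φ (-r) = ∫ y : ℝ, F (-r) (y + r) := (integral_add_right_eq_self _ r).symm
      _ = ∫ y : ℝ, F r y := by rw [key]
      _ = φ r := rfl
  -- split the r-integral
  have hsplit : (∫ r : ℝ, φ r) = 2 * ∫ r in Ioi (0:ℝ), φ r := by
    have hIic : (∫ r in Iic (0:ℝ), φ r) = ∫ r in Ioi (0:ℝ), φ r := by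
      have : (∫ r in Iic (0:ℝ), φ r) = ∫ r in Iic (0:ℝ), φ (-r) := by
        refine integral_congr_ae (Filter.Eventually.of_forall fun r => (hφeven r).symm)
      rw [this, integral_comp_neg_Iic, neg_zero]
    rw [← intervalIntegral.integral_Iic_add_Ioi (hφi.integrableOn) (hφi.integrableOn), hIic]
    ring
  -- identify the RHS
  have hRHS : (∫ r in Ioi (0:ℝ), ∫ y : ℝ,
      2 * θ r * f y * f (r + y) * (2 * g (y + r / 2) - g y - g (r + y)))
      = 2 * ∫ r in Ioi (0:ℝ), φ r := by
    rw [← integral_const_mul]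
    refine setIntegral_congr_fun measurableSet_Ioi fun r _ => ?_
    rw [hφdef]
    simp only
    rw [← integral_const_mul]
    refine integral_congr_ae (Filter.Eventually.of_forall fun y => ?_)
    simp only [hFdef]
    ring
  refine ⟨hG, ?_, ?_⟩
  · have heq : (fun q : ℝ × ℝ =>
        2 * θ q.1 * f q.2 * f (q.1 + q.2) * (2 * g (q.2 + q.1 / 2) - g q.2 - g (q.1 + q.2)))
        = fun q : ℝ × ℝ => 2 * F q.1 q.2 := by
      funext q; simp only [hFdef]; ring
    rw [heq]
    exact (hF.const_mul 2).integrableOn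
  · rw [hint, hfub, hsplit, hRHS]
end

section
/- Let d : [0,∞) → ℝ be continuous, let y₀ > 0, τ > 0, and ε ∈ (0, y₀/2), and suppose |d(y)| ≥ τ/2 for all y ∈ (y₀ − ε, y₀ + ε). Then | ∫₀^∞ d(y) h_{y₀,ε}(y) dy | ≥ τ ε / 2. -/
open MeasureTheory Set

lemma hat_nonneg (p w y : ℝ) : 0 ≤ hat p w y := le_max_right _ _

lemma hat_continuous (p w : ℝ) : Continuous (hat p w) := by
  unfold hat
  fun_prop

lemma hat_eq_zero {p w y : ℝ} (hw : 0 < w) (h : w ≤ |y - p|) : hat p w y = 0 := by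
  unfold hat
  rw [max_eq_right]
  have : (1:ℝ) ≤ |y - p| / w := (one_le_div hw).mpr h
  linarith

lemma hat_integral (p w : ℝ) (hw : 0 < w) :
    ∫ y in Set.Ioo (p - w) (p + w), hat p w y = w := by
  rw [← MeasureTheory.integral_Ioc_eq_integral_Ioo,
    ← intervalIntegral.integral_of_le (by linarith)]
  have hint : ∀ a b : ℝ, IntervalIntegrable (hat p w) volume a b :=
    fun a b => (hat_continuous p w).intervalIntegrable a b
  have hsplit := intervalIntegral.integral_add_adjacent_intervals
    (hint (p - w) p) (hint p (p + w))
  rw [← hsplit]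
  have h1 : ∫ y in (p - w)..p, hat p w y = ∫ y in (p - w)..p, (1 - (p - y) / w) := by
    apply intervalIntegral.integral_congr
    intro y hy
    rw [Set.uIcc_of_le (by linarith)] at hy
    unfold hat
    rw [abs_of_nonpos (by linarith [hy.2]), max_eq_left]
    · ring_nf
    · have : (p - y) / w ≤ 1 := by
        rw [div_le_one hw]; linarith [hy.1]
      have h2 : -(y - p) = p - y := by ring
      rw [h2]; linarith
  have h2 : ∫ y in p..(p + w), hat p w y = ∫ y in p..(p + w), (1 - (y - p) / w) := by
    apply intervalIntegral.integral_congr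
    intro y hy
    rw [Set.uIcc_of_le (by linarith)] at hy
    unfold hat
    rw [abs_of_nonneg (by linarith [hy.1]), max_eq_left]
    have : (y - p) / w ≤ 1 := by
      rw [div_le_one hw]; linarith [hy.2]
    linarith
  rw [h1, h2]
  have base : ∫ x in (0:ℝ)..w, (1 - x / w) = w / 2 := by
    rw [intervalIntegral.integral_sub intervalIntegrable_const
      ((by fun_prop : Continuous fun x : ℝ => x / w).intervalIntegrable 0 w)]
    rw [intervalIntegral.integral_div, integral_id, intervalIntegral.integral_const]
    field_simp
    ring
  have e1 : ∫ y in (p - w)..p, (1 - (p - y) / w) = w / 2 := by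
    have : (fun y : ℝ => 1 - (p - y) / w) = fun y => (fun x => 1 - x / w) (p - y) := by
      funext y; simp
    rw [this, intervalIntegral.integral_comp_sub_left (fun x => 1 - x / w) p]
    simp only [sub_self, sub_sub_cancel]
    exact base
  have e2 : ∫ y in p..(p + w), (1 - (y - p) / w) = w / 2 := by
    have : (fun y : ℝ => 1 - (y - p) / w) = fun y => (fun x => 1 - x / w) (y - p) := by
      funext y; simp
    rw [this, intervalIntegral.integral_comp_sub_right (fun x => 1 - x / w) p]
    simp only [sub_self, add_sub_cancel_left]
    exact base
  rw [e1, e2]; ring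

lemma key_lower (d : ℝ → ℝ) (y₀ τ ε : ℝ) (hy₀ : 0 < y₀) (hτ : 0 < τ)
    (hε : ε ∈ Set.Ioo 0 (y₀ / 2))
    (hcont : ContinuousOn d (Set.Icc (y₀ - ε) (y₀ + ε)))
    (hpos : ∀ y ∈ Set.Ioo (y₀ - ε) (y₀ + ε), τ / 2 ≤ d y) :
    τ * ε / 2 ≤ ∫ y in Set.Ioo (y₀ - ε) (y₀ + ε), d y * hat y₀ ε y := by
  have hε0 := hε.1
  have hint2 : IntegrableOn (fun y => d y * hat y₀ ε y)
      (Set.Ioo (y₀ - ε) (y₀ + ε)) volume := by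
    apply MeasureTheory.IntegrableOn.mono_set _ Set.Ioo_subset_Icc_self
    exact (hcont.mul (hat_continuous y₀ ε).continuousOn).integrableOn_Icc
  have hint1 : IntegrableOn (fun y => τ / 2 * hat y₀ ε y)
      (Set.Ioo (y₀ - ε) (y₀ + ε)) volume :=
    ((continuous_const.mul (hat_continuous y₀ ε)).continuousOn).integrableOn_Icc.mono_set
      Set.Ioo_subset_Icc_self
  have hmono : ∫ y in Set.Ioo (y₀ - ε) (y₀ + ε), τ / 2 * hat y₀ ε y
      ≤ ∫ y in Set.Ioo (y₀ - ε) (y₀ + ε), d y * hat y₀ ε y := by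
    apply MeasureTheory.setIntegral_mono_on hint1 hint2 measurableSet_Ioo
    intro y hy
    exact mul_le_mul_of_nonneg_right (hpos y hy) (hat_nonneg _ _ _)
  calc τ * ε / 2 = τ / 2 * ∫ y in Set.Ioo (y₀ - ε) (y₀ + ε), hat y₀ ε y := by
        rw [hat_integral y₀ ε hε0]; ring
    _ = ∫ y in Set.Ioo (y₀ - ε) (y₀ + ε), τ / 2 * hat y₀ ε y := by
        rw [MeasureTheory.integral_const_mul]
    _ ≤ _ := hmono

theorem stmt11 (d : ℝ → ℝ) (hd : ContinuousOn d (Set.Ici 0))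
    (y₀ τ ε : ℝ) (hy₀ : 0 < y₀) (hτ : 0 < τ) (hε : ε ∈ Set.Ioo 0 (y₀ / 2))
    (hgap : ∀ y ∈ Set.Ioo (y₀ - ε) (y₀ + ε), τ / 2 ≤ |d y|) :
    τ * ε / 2 ≤ |∫ y in Set.Ioi (0:ℝ), d y * hat y₀ ε y| := by
  obtain ⟨hε0, hε2⟩ := hε
  have ha : 0 < y₀ - ε := by linarith
  have hIccIci : Set.Icc (y₀ - ε) (y₀ + ε) ⊆ Set.Ici 0 := fun x hx => by
    simp only [Set.mem_Ici]; linarith [hx.1]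
  have hIooIcc : Set.Ioo (y₀ - ε) (y₀ + ε) ⊆ Set.Icc (y₀ - ε) (y₀ + ε) :=
    Set.Ioo_subset_Icc_self
  -- restrict integral
  have hrestrict : ∫ y in Set.Ioi (0:ℝ), d y * hat y₀ ε y
      = ∫ y in Set.Ioo (y₀ - ε) (y₀ + ε), d y * hat y₀ ε y := by
    apply MeasureTheory.setIntegral_eq_of_subset_of_ae_diff_eq_zero
      measurableSet_Ioi.nullMeasurableSet
      (fun x hx => Set.mem_Ioi.mpr (by linarith [hx.1]))
    filter_upwards with x hx
    have hx2 : x ∉ Set.Ioo (y₀ - ε) (y₀ + ε) := hx.2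
    rw [Set.mem_Ioo, not_and_or, not_lt, not_lt] at hx2
    have : ε ≤ |x - y₀| := by
      rcases hx2 with h | h
      · rw [abs_sub_comm]; exact le_abs.mpr (Or.inl (by linarith))
      · exact le_abs.mpr (Or.inl (by linarith))
    rw [hat_eq_zero hε0 this, mul_zero]
  rw [hrestrict]
  -- sign of d y₀
  have hy₀mem : y₀ ∈ Set.Ioo (y₀ - ε) (y₀ + ε) := ⟨by linarith, by linarith⟩
  have hdy₀ : d y₀ ≠ 0 := by
    intro h
    have := hgap y₀ hy₀mem
    rw [h, abs_zero] at this
    linarith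
  have sign_const : (∀ y ∈ Set.Ioo (y₀ - ε) (y₀ + ε), τ / 2 ≤ d y) ∨
      (∀ y ∈ Set.Ioo (y₀ - ε) (y₀ + ε), τ / 2 ≤ -(d y)) := by
    have ivtaux : ∀ y ∈ Set.Ioo (y₀ - ε) (y₀ + ε), d y ≠ 0 ∧
        (0 < d y₀ → 0 < d y) ∧ (d y₀ < 0 → d y < 0) := by
      intro y hy
      have hdy : d y ≠ 0 := by
        intro h
        have := hgap y hy
        rw [h, abs_zero] at this; linarith
      refine ⟨hdy, ?_, ?_⟩ <;> intro hsgn <;> by_contra hcon <;> push_neg at hcon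
      · -- d y₀ > 0, d y ≤ 0 so d y < 0
        have hylt : d y < 0 := lt_of_le_of_ne hcon hdy
        have hsub : Set.uIcc y y₀ ⊆ Set.Ioo (y₀ - ε) (y₀ + ε) :=
          Set.ordConnected_Ioo.uIcc_subset hy hy₀mem
        have hc : ContinuousOn d (Set.uIcc y y₀) :=
          hd.mono (fun x hx => hIccIci (hIooIcc (hsub hx)))
        have : (0:ℝ) ∈ Set.uIcc (d y) (d y₀) :=
          Set.mem_uIcc.mpr (Or.inl ⟨le_of_lt hylt, le_of_lt hsgn⟩)
        obtain ⟨c, hc1, hc2⟩ := intermediate_value_uIcc hc this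
        have := hgap c (hsub hc1)
        rw [hc2, abs_zero] at this; linarith
      · have hygt : 0 < d y := lt_of_le_of_ne hcon (Ne.symm hdy)
        have hsub : Set.uIcc y y₀ ⊆ Set.Ioo (y₀ - ε) (y₀ + ε) :=
          Set.ordConnected_Ioo.uIcc_subset hy hy₀mem
        have hc : ContinuousOn d (Set.uIcc y y₀) :=
          hd.mono (fun x hx => hIccIci (hIooIcc (hsub hx)))
        have : (0:ℝ) ∈ Set.uIcc (d y) (d y₀) :=
          Set.mem_uIcc.mpr (Or.inr ⟨le_of_lt hsgn, le_of_lt hygt⟩)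
        obtain ⟨c, hc1, hc2⟩ := intermediate_value_uIcc hc this
        have := hgap c (hsub hc1)
        rw [hc2, abs_zero] at this; linarith
    rcases lt_or_gt_of_ne hdy₀ with h | h
    · right
      intro y hy
      have := (ivtaux y hy).2.2 h
      have habs := hgap y hy
      rw [abs_of_neg this] at habs
      exact habs
    · left
      intro y hy
      have := (ivtaux y hy).2.1 h
      have habs := hgap y hy
      rw [abs_of_pos this] at habs
      exact habs
  rcases sign_const with hpos | hneg
  · have := key_lower d y₀ τ ε hy₀ hτ ⟨hε0, hε2⟩ (hd.mono hIccIci) hpos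
    exact this.trans (le_abs_self _)
  · have hcont : ContinuousOn (fun y => -(d y)) (Set.Icc (y₀ - ε) (y₀ + ε)) :=
      (hd.mono hIccIci).neg
    have := key_lower (fun y => -(d y)) y₀ τ ε hy₀ hτ ⟨hε0, hε2⟩ hcont hneg
    have heq : ∫ y in Set.Ioo (y₀ - ε) (y₀ + ε), -(d y) * hat y₀ ε y
        = -∫ y in Set.Ioo (y₀ - ε) (y₀ + ε), d y * hat y₀ ε y := by
      rw [← MeasureTheory.integral_neg]
      congr 1
      funext y; ring
    rw [heq] at this
    exact this.trans (neg_le_abs _)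
end

section
/- Let T > 0, a ∈ ℝ, and C > 0. Let θ, θ̃ : ℝ → ℝ be bounded and measurable, with θ even. Let f, f̃ : ℝ × [0,T] → ℝ be jointly measurable with f nonnegative, ‖f(·,t)‖_{L¹(ℝ)} ≤ C and ‖f̃(·,t)‖_{L¹(ℝ)} ≤ C for all t ∈ [0,T], and let g : ℝ × [0,T] → ℝ be bounded and jointly measurable. Assume: (H1) for every bounded measurable φ : ℝ → ℝ and every t ∈ [0,T], ∫_ℝ f̃(x,t) φ(x) dx = ∫₀^t ∫∫_{ℝ²} [ 2 f̃(x₁,s) f(x₂,s) θ(x₁−x₂) + f(x₁,s) f(x₂,s) θ̃(x₁−x₂) ] · [ 2 φ((x₁+x₂)/2) − φ(x₁) − φ(x₂) ] dx₁ dx₂ ds; and (H2) for every x ∈ ℝ and t ∈ [0,T], g(x,t) = 𝟙[x ≤ a] + ∫_t^T ∫_ℝ 2 f(y,s) θ(x−y) [ 2 g((x+y)/2, s) − g(x,s) − g(y,s) ] dy ds. Then ∫_{−∞}^a f̃(x,T) dx = ∫₀^T ∫∫_{ℝ²} θ̃(x₁−x₂) f(x₁,s) f(x₂,s) [ 2 g((x₁+x₂)/2,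 s) − g(x₁,s) − g(x₂,s) ] dx₁ dx₂ ds. -/
/-!
Duality between the perturbation `f̃` and the adjoint solution `g`: formally,
`d/ds ∫ f̃(·,s) g(·,s) = W_s[g(·,s)] - ∫ f̃(·,s) 𝓛*_θ[g](·,s)`, where `W_s[φ]` is the
`s`-integrand of (H1). The part of `W_s[g(·,s)]` that is linear in `f̃` is exactly
`∫ f̃(·,s) 𝓛*_θ[g](·,s)`, so only the `θ̃` source term survives. Rigorously: insert
`g(·,T) = g(·,s) - ∫_s^T 𝓛*_θ[g](·,r) dr` into (H1) at time `T`, exchange the `(s, r)`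
integrals over the triangle `s < r`, and use (H1) at time `r` with test function
`𝓛*_θ[g](·,r)`.
-/

open MeasureTheory Set Function

section WeightedBounds

variable {α β : Type*} [MeasurableSpace α] [MeasurableSpace β] {μ : Measure α} {ν : Measure β}
  {K : ℝ}

theorem abs_integral_mul_le_of_abs_le {v w : α → ℝ} (hv : Integrable v μ)
    (hw : ∀ᵐ x ∂μ, |w x| ≤ K) : |∫ x, v x * w x ∂μ| ≤ K * ∫ x, |v x| ∂μ := by
  rw [← integral_const_mul K fun x => |v x|]
  refine (norm_integral_le_of_norm_le (hv.abs.const_mul K) ?_ : ‖∫ x, v x * w x ∂μ‖ ≤ _)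
  filter_upwards [hw] with x hx
  rw [Real.norm_eq_abs, abs_mul, mul_comm]
  exact mul_le_mul_of_nonneg_right hx (abs_nonneg _)

variable {u : α → ℝ} {v : β → ℝ} {w : α × β → ℝ}

theorem integrable_mul_prod_mul_of_abs_le (hu : Integrable u μ) (hv : Integrable v ν)
    (hw : AEStronglyMeasurable w (μ.prod ν)) (hK : ∀ᵐ p ∂μ.prod ν, |w p| ≤ K) :
    Integrable (fun p => u p.1 * v p.2 * w p) (μ.prod ν) :=
  (hu.mul_prod hv).mul_bdd hw hK

theorem abs_integral_mul_prod_mul_le [SFinite μ] [SFinite ν] (hu : Integrable u μ)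
    (hv : Integrable v ν) (hK : ∀ᵐ p ∂μ.prod ν, |w p| ≤ K) :
    |∫ p, u p.1 * v p.2 * w p ∂μ.prod ν| ≤ K * ((∫ x, |u x| ∂μ) * ∫ y, |v y| ∂ν) := by
  have h := abs_integral_mul_le_of_abs_le (hu.mul_prod hv) hK
  simp only [abs_mul] at h
  rwa [integral_prod_mul (fun x => |u x|) (fun y => |v y|)] at h

theorem integral_mul_prod_mul_eq [SFinite μ] [SFinite ν] (hu : Integrable u μ) (hv : Integrable v ν)
    (hw : AEStronglyMeasurable w (μ.prod ν)) (hK : ∀ᵐ p ∂μ.prod ν, |w p| ≤ K) :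
    ∫ p, u p.1 * v p.2 * w p ∂μ.prod ν = ∫ x, u x * ∫ y, v y * w (x, y) ∂ν ∂μ := by
  rw [integral_prod _ (integrable_mul_prod_mul_of_abs_le hu hv hw hK)]
  simp only [mul_assoc, integral_const_mul]

end WeightedBounds

theorem integral_mul_intervalIntegral_comm {α : Type*} [MeasurableSpace α] {μ : Measure α}
    [SFinite μ] {k : α → ℝ} {h : α → ℝ → ℝ} {a b M : ℝ} (hab : a ≤ b) (hk : Integrable k μ)
    (hh : AEStronglyMeasurable (uncurry h) (μ.prod (volume.restrict (Ioc a b))))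
    (hM : ∀ x, ∀ r ∈ Ioc a b, |h x r| ≤ M) :
    ∫ x, k x * (∫ r in a..b, h x r) ∂μ = ∫ r in a..b, ∫ x, k x * h x r ∂μ := by
  simp only [intervalIntegral.integral_of_le hab, ← integral_const_mul]
  refine integral_integral_swap ?_
  have hM' : ∀ᵐ z ∂μ.prod (volume.restrict (Ioc a b)), |uncurry h z| ≤ M := by
    rw [← Measure.restrict_univ (μ := μ), Measure.prod_restrict]
    exact ae_restrict_of_forall_mem (MeasurableSet.univ.prod measurableSet_Ioc)
      fun z hz => hM z.1 z.2 hz.2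
  refine (integrable_mul_prod_mul_of_abs_le hk (integrable_const (1 : ℝ)) hh hM').congr
    (ae_of_all _ fun z => ?_)
  simp [uncurry]

section Triangle

variable {E : ℝ → ℝ → ℝ} {a b : ℝ}

theorem intervalIntegral_eq_setIntegral_indicator_lt_left {s : ℝ} (hs : s ∈ Icc a b) :
    ∫ r in s..b, E s r = ∫ r in Ioc a b, {z : ℝ × ℝ | z.1 < z.2}.indicator (uncurry E) (s, r) := by
  have : (fun r => {z : ℝ × ℝ | z.1 < z.2}.indicator (uncurry E) (s, r))
      = (Ioi s).indicator (E s) := by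
    ext r; simp [indicator_apply]
  rw [this, setIntegral_indicator measurableSet_Ioi, Ioc_inter_Ioi, max_eq_right hs.1,
    intervalIntegral.integral_of_le hs.2]

theorem intervalIntegral_eq_setIntegral_indicator_lt_right {r : ℝ} (hr : r ∈ Icc a b) :
    ∫ s in a..r, E s r = ∫ s in Ioc a b, {z : ℝ × ℝ | z.1 < z.2}.indicator (uncurry E) (s, r) := by
  have : (fun s => {z : ℝ × ℝ | z.1 < z.2}.indicator (uncurry E) (s, r))
      = (Iio r).indicator (E · r) := by
    ext s; simp [indicator_apply]
  have hIoo : Ioc a b ∩ Iio r = Ioo a r := by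
    ext s; simp only [mem_inter_iff, mem_Ioc, mem_Iio, mem_Ioo]; grind
  rw [this, setIntegral_indicator measurableSet_Iio, hIoo,
    intervalIntegral.integral_of_le hr.1, integral_Ioc_eq_integral_Ioo]

theorem integrable_indicator_lt_of_integrableOn
    (hE : IntegrableOn (uncurry E) (Ioc a b ×ˢ Ioc a b)) :
    Integrable ({z : ℝ × ℝ | z.1 < z.2}.indicator (uncurry E))
      ((volume.restrict (Ioc a b)).prod (volume.restrict (Ioc a b))) := by
  rw [Measure.prod_restrict, ← Measure.volume_eq_prod]
  exact hE.integrable.indicator (measurableSet_lt measurable_fst measurable_snd)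

theorem intervalIntegral_intervalIntegral_triangle_swap (hab : a ≤ b)
    (hE : IntegrableOn (uncurry E) (Ioc a b ×ˢ Ioc a b)) :
    ∫ s in a..b, ∫ r in s..b, E s r = ∫ r in a..b, ∫ s in a..r, E s r := by
  rw [intervalIntegral.integral_of_le hab, intervalIntegral.integral_of_le hab,
    setIntegral_congr_fun measurableSet_Ioc fun s hs =>
      intervalIntegral_eq_setIntegral_indicator_lt_left (Ioc_subset_Icc_self hs),
    setIntegral_congr_fun measurableSet_Ioc fun r hr =>
      intervalIntegral_eq_setIntegral_indicator_lt_right (E := E) (Ioc_subset_Icc_self hr)]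
  exact integral_integral_swap (integrable_indicator_lt_of_integrableOn hE)

theorem intervalIntegrable_intervalIntegral_of_integrableOn (hab : a ≤ b)
    (hE : IntegrableOn (uncurry E) (Ioc a b ×ˢ Ioc a b)) :
    IntervalIntegrable (fun s => ∫ r in s..b, E s r) volume a b := by
  rw [intervalIntegrable_iff_integrableOn_Ioc_of_le hab]
  refine IntegrableOn.congr_fun ?_ (fun s hs =>
    (intervalIntegral_eq_setIntegral_indicator_lt_left (Ioc_subset_Icc_self hs)).symm)
    measurableSet_Ioc
  exact (integrable_indicator_lt_of_integrableOn hE).integral_prod_left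

end Triangle

theorem intervalIntegrable_of_abs_le {φ : ℝ → ℝ} {a b M : ℝ} (hab : a ≤ b)
    (hφ : AEStronglyMeasurable φ) (hM : ∀ r ∈ Ioc a b, |φ r| ≤ M) :
    IntervalIntegrable φ volume a b :=
  (intervalIntegrable_iff_integrableOn_Ioc_of_le hab).2 <|
    Measure.integrableOn_of_bounded measure_Ioc_lt_top.ne hφ
      (ae_restrict_of_forall_mem measurableSet_Ioc hM)

theorem intervalIntegrable_integral_of_abs_le {α : Type*} [MeasurableSpace α] {μ : Measure α}
    [SFinite μ] {F : ℝ → α → ℝ} {a b M : ℝ} (hab : a ≤ b) (hF : Measurable (uncurry F))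
    (hM : ∀ s ∈ Ioc a b, |∫ x, F s x ∂μ| ≤ M) :
    IntervalIntegrable (fun s => ∫ x, F s x ∂μ) volume a b :=
  intervalIntegrable_of_abs_le hab
    hF.stronglyMeasurable.integral_prod_right'.aestronglyMeasurable hM

noncomputable def midpointDefect (φ : ℝ → ℝ) (x y : ℝ) : ℝ := 2 * φ ((x + y) / 2) - φ x - φ y

theorem abs_midpointDefect_le {φ : ℝ → ℝ} {K : ℝ} (h : ∀ x, |φ x| ≤ K) (x y : ℝ) :
    |midpointDefect φ x y| ≤ 4 * K := by
  have h₁ := abs_le.mp (h ((x + y) / 2))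
  have h₂ := abs_le.mp (h x)
  have h₃ := abs_le.mp (h y)
  exact abs_le.mpr ⟨by unfold midpointDefect; linarith, by unfold midpointDefect; linarith⟩

theorem midpointDefect_intervalIntegral {Φ : ℝ → ℝ → ℝ} {a b : ℝ}
    (hΦ : ∀ z, IntervalIntegrable (Φ z) volume a b) (x y : ℝ) :
    midpointDefect (fun z => ∫ r in a..b, Φ z r) x y = ∫ r in a..b, midpointDefect (Φ · r) x y := by
  simp only [midpointDefect]
  rw [intervalIntegral.integral_sub (((hΦ _).const_mul 2).sub (hΦ x)) (hΦ y),
    intervalIntegral.integral_sub ((hΦ _).const_mul 2) (hΦ x), intervalIntegral.integral_const_mul]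

theorem measurable_midpointDefect {φ : ℝ → ℝ} (hφ : Measurable φ) :
    Measurable fun p : ℝ × ℝ => midpointDefect φ p.1 p.2 := by
  unfold midpointDefect; fun_prop

/-- The adjoint operator `𝓛*_θ[g](x, s)` of the paper. -/
noncomputable def adjointOp (θ : ℝ → ℝ) (f g : ℝ → ℝ → ℝ) (x s : ℝ) : ℝ :=
  ∫ y, 2 * f y s * θ (x - y) * midpointDefect (g · s) x y

noncomputable def collisionKernel (θ θt : ℝ → ℝ) (f ft : ℝ → ℝ → ℝ) (s : ℝ) (p : ℝ × ℝ) : ℝ :=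
  2 * ft p.1 s * f p.2 s * θ (p.1 - p.2) + f p.1 s * f p.2 s * θt (p.1 - p.2)

/-- The `s`-integrand of the right-hand side of (H1). -/
noncomputable def weakRhs (θ θt : ℝ → ℝ) (f ft : ℝ → ℝ → ℝ) (φ : ℝ → ℝ) (s : ℝ) : ℝ :=
  ∫ p, collisionKernel θ θt f ft s p * midpointDefect φ p.1 p.2

section AdjointOp

variable {θ : ℝ → ℝ} {f g : ℝ → ℝ → ℝ}

theorem measurable_adjointOp (hθ : Measurable θ) (hf : Measurable (uncurry f))
    (hg : Measurable (uncurry g)) : Measurable (uncurry (adjointOp θ f g)) := by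
  have : Measurable fun z : (ℝ × ℝ) × ℝ =>
      2 * f z.2 z.1.2 * θ (z.1.1 - z.2) * midpointDefect (g · z.1.2) z.1.1 z.2 := by
    unfold midpointDefect; fun_prop
  exact this.stronglyMeasurable.integral_prod_right'.measurable

theorem abs_adjointOp_le {s Kθ Kg C : ℝ} (hf : Integrable (f · s)) (hfC : ∫ y, |f y s| ≤ C)
    (hθ : ∀ r, |θ r| ≤ Kθ) (hg : ∀ x, |g x s| ≤ Kg) (x : ℝ) :
    |adjointOp θ f g x s| ≤ 8 * Kθ * Kg * C := by
  have hθ₀ : 0 ≤ Kθ := (abs_nonneg _).trans (hθ 0)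
  have hg₀ : 0 ≤ Kg := (abs_nonneg _).trans (hg 0)
  have hw (y : ℝ) : |2 * θ (x - y) * midpointDefect (g · s) x y| ≤ 8 * Kθ * Kg := by
    rw [abs_mul, abs_mul, abs_two]
    calc 2 * |θ (x - y)| * |midpointDefect (g · s) x y| ≤ 2 * Kθ * (4 * Kg) := by
          gcongr
          exacts [hθ _, abs_midpointDefect_le hg x y]
      _ = 8 * Kθ * Kg := by ring
  calc |adjointOp θ f g x s|
      = |∫ y, f y s * (2 * θ (x - y) * midpointDefect (g · s) x y)| := by
        unfold adjointOp; congr 1; exact integral_congr_ae (ae_of_all _ fun y => by ring)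
    _ ≤ 8 * Kθ * Kg * ∫ y, |f y s| := abs_integral_mul_le_of_abs_le hf (ae_of_all _ hw)
    _ ≤ 8 * Kθ * Kg * C := mul_le_mul_of_nonneg_left hfC (by positivity)

end AdjointOp

theorem abs_comp_sub_mul_le {θ : ℝ → ℝ} {w : ℝ × ℝ → ℝ} {Kθ Kw : ℝ} (hθ : ∀ r, |θ r| ≤ Kθ)
    (hw : ∀ p, |w p| ≤ Kw) (p : ℝ × ℝ) : |θ (p.1 - p.2) * w p| ≤ Kθ * Kw := by
  rw [abs_mul]
  exact mul_le_mul (hθ _) (hw p) (abs_nonneg _) ((abs_nonneg _).trans (hθ 0))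

theorem integrable_mul_mul_comp_sub_mul {u v θ : ℝ → ℝ} {w : ℝ × ℝ → ℝ} {Kθ Kw : ℝ}
    (hu : Integrable u) (hv : Integrable v) (hθm : Measurable θ) (hθ : ∀ r, |θ r| ≤ Kθ)
    (hwm : AEStronglyMeasurable w) (hw : ∀ p, |w p| ≤ Kw) :
    Integrable fun p : ℝ × ℝ => u p.1 * v p.2 * (θ (p.1 - p.2) * w p) :=
  integrable_mul_prod_mul_of_abs_le hu hv
    ((hθm.comp (by fun_prop)).aestronglyMeasurable.mul hwm)
    (ae_of_all _ (abs_comp_sub_mul_le hθ hw))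

theorem abs_integral_mul_mul_comp_sub_mul_le {u v θ : ℝ → ℝ} {w : ℝ × ℝ → ℝ} {Kθ Kw C : ℝ}
    (hu : Integrable u) (hv : Integrable v) (huC : ∫ x, |u x| ≤ C) (hvC : ∫ x, |v x| ≤ C)
    (hθ : ∀ r, |θ r| ≤ Kθ) (hw : ∀ p, |w p| ≤ Kw) :
    |∫ p : ℝ × ℝ, u p.1 * v p.2 * (θ (p.1 - p.2) * w p)| ≤ Kθ * Kw * C ^ 2 := by
  have hu₀ : 0 ≤ ∫ x, |u x| := integral_nonneg fun _ => abs_nonneg _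
  have hv₀ : 0 ≤ ∫ x, |v x| := integral_nonneg fun _ => abs_nonneg _
  have hK : 0 ≤ Kθ * Kw := (abs_nonneg _).trans (abs_comp_sub_mul_le hθ hw 0)
  calc _ ≤ Kθ * Kw * ((∫ x, |u x|) * ∫ x, |v x|) :=
        abs_integral_mul_prod_mul_le hu hv (ae_of_all _ (abs_comp_sub_mul_le hθ hw))
    _ ≤ Kθ * Kw * C ^ 2 := by
        rw [sq]; exact mul_le_mul_of_nonneg_left (mul_le_mul huC hvC hv₀ (hu₀.trans huC)) hK

section CollisionKernel

variable {θ θt : ℝ → ℝ} {f ft : ℝ → ℝ → ℝ} {s Kθ Kt : ℝ}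

theorem collisionKernel_mul (w : ℝ × ℝ → ℝ) (p : ℝ × ℝ) :
    collisionKernel θ θt f ft s p * w p
      = 2 * (ft p.1 s * f p.2 s * (θ (p.1 - p.2) * w p))
        + f p.1 s * f p.2 s * (θt (p.1 - p.2) * w p) := by
  unfold collisionKernel; ring

variable {w : ℝ × ℝ → ℝ} {Kw : ℝ}

theorem integrable_collisionKernel_mul (hθm : Measurable θ) (hθtm : Measurable θt)
    (hθ : ∀ r, |θ r| ≤ Kθ) (hθt : ∀ r, |θt r| ≤ Kt) (hft : Integrable (ft · s))
    (hf : Integrable (f · s)) (hwm : AEStronglyMeasurable w) (hw : ∀ p, |w p| ≤ Kw) :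
    Integrable fun p => collisionKernel θ θt f ft s p * w p := by
  simp only [collisionKernel_mul]
  exact ((integrable_mul_mul_comp_sub_mul hft hf hθm hθ hwm hw).const_mul 2).add
    (integrable_mul_mul_comp_sub_mul hf hf hθtm hθt hwm hw)

theorem integral_collisionKernel_mul (hθm : Measurable θ) (hθtm : Measurable θt)
    (hθ : ∀ r, |θ r| ≤ Kθ) (hθt : ∀ r, |θt r| ≤ Kt) (hft : Integrable (ft · s))
    (hf : Integrable (f · s)) (hwm : AEStronglyMeasurable w) (hw : ∀ p, |w p| ≤ Kw) :
    ∫ p, collisionKernel θ θt f ft s p * w p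
      = 2 * (∫ p, ft p.1 s * f p.2 s * (θ (p.1 - p.2) * w p))
        + ∫ p, f p.1 s * f p.2 s * (θt (p.1 - p.2) * w p) := by
  simp only [collisionKernel_mul]
  rw [integral_add ((integrable_mul_mul_comp_sub_mul hft hf hθm hθ hwm hw).const_mul 2)
    (integrable_mul_mul_comp_sub_mul hf hf hθtm hθt hwm hw), integral_const_mul]

theorem abs_integral_collisionKernel_mul_le {C : ℝ} (hθm : Measurable θ) (hθtm : Measurable θt)
    (hθ : ∀ r, |θ r| ≤ Kθ) (hθt : ∀ r, |θt r| ≤ Kt) (hft : Integrable (ft · s))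
    (hf : Integrable (f · s)) (hftC : ∫ x, |ft x s| ≤ C) (hfC : ∫ x, |f x s| ≤ C)
    (hwm : AEStronglyMeasurable w) (hw : ∀ p, |w p| ≤ Kw) :
    |∫ p, collisionKernel θ θt f ft s p * w p| ≤ (2 * Kθ + Kt) * Kw * C ^ 2 := by
  rw [integral_collisionKernel_mul hθm hθtm hθ hθt hft hf hwm hw]
  have h₁ := abs_integral_mul_mul_comp_sub_mul_le hft hf hftC hfC hθ hw
  have h₂ := abs_integral_mul_mul_comp_sub_mul_le hf hf hfC hfC hθt hw
  calc _ ≤ 2 * |∫ p, ft p.1 s * f p.2 s * (θ (p.1 - p.2) * w p)|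
          + |∫ p, f p.1 s * f p.2 s * (θt (p.1 - p.2) * w p)| :=
        (abs_add_le _ _).trans_eq (by rw [abs_mul, abs_two])
    _ ≤ (2 * Kθ + Kt) * Kw * C ^ 2 := by linarith

end CollisionKernel

section WeakRhs

variable {θ θt : ℝ → ℝ} {f ft : ℝ → ℝ → ℝ} {s Kθ Kt : ℝ}

theorem measurable_weakRhs {Φ : ℝ → ℝ → ℝ} (hθm : Measurable θ) (hθtm : Measurable θt)
    (hfm : Measurable (uncurry f)) (hftm : Measurable (uncurry ft))
    (hΦm : Measurable (uncurry Φ)) :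
    Measurable (uncurry fun s r => weakRhs θ θt f ft (Φ · r) s) := by
  have : Measurable fun z : (ℝ × ℝ) × (ℝ × ℝ) =>
      collisionKernel θ θt f ft z.1.1 z.2 * midpointDefect (Φ · z.1.2) z.2.1 z.2.2 := by
    unfold collisionKernel midpointDefect; fun_prop
  exact this.stronglyMeasurable.integral_prod_right'.measurable

theorem abs_weakRhs_le {φ : ℝ → ℝ} {Kφ C : ℝ} (hθm : Measurable θ) (hθtm : Measurable θt)
    (hθ : ∀ r, |θ r| ≤ Kθ) (hθt : ∀ r, |θt r| ≤ Kt) (hft : Integrable (ft · s))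
    (hf : Integrable (f · s)) (hftC : ∫ x, |ft x s| ≤ C) (hfC : ∫ x, |f x s| ≤ C)
    (hφm : Measurable φ) (hφ : ∀ x, |φ x| ≤ Kφ) :
    |weakRhs θ θt f ft φ s| ≤ (2 * Kθ + Kt) * (4 * Kφ) * C ^ 2 :=
  abs_integral_collisionKernel_mul_le hθm hθtm hθ hθt hft hf hftC hfC
    (measurable_midpointDefect hφm).aestronglyMeasurable fun p => abs_midpointDefect_le hφ p.1 p.2

theorem weakRhs_sub {φ ψ : ℝ → ℝ} {Kφ Kψ : ℝ} (hθm : Measurable θ) (hθtm : Measurable θt)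
    (hθ : ∀ r, |θ r| ≤ Kθ) (hθt : ∀ r, |θt r| ≤ Kt) (hft : Integrable (ft · s))
    (hf : Integrable (f · s)) (hφm : Measurable φ) (hφ : ∀ x, |φ x| ≤ Kφ)
    (hψm : Measurable ψ) (hψ : ∀ x, |ψ x| ≤ Kψ) :
    weakRhs θ θt f ft φ s - weakRhs θ θt f ft ψ s
      = weakRhs θ θt f ft (fun x => φ x - ψ x) s := by
  unfold weakRhs
  rw [← integral_sub
    (integrable_collisionKernel_mul hθm hθtm hθ hθt hft hf
      (measurable_midpointDefect hφm).aestronglyMeasurable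
      fun p => abs_midpointDefect_le hφ p.1 p.2)
    (integrable_collisionKernel_mul hθm hθtm hθ hθt hft hf
      (measurable_midpointDefect hψm).aestronglyMeasurable
      fun p => abs_midpointDefect_le hψ p.1 p.2)]
  congr 1; ext p; unfold midpointDefect; ring

theorem weakRhs_intervalIntegral {Φ : ℝ → ℝ → ℝ} {a b M : ℝ} (hab : a ≤ b)
    (hθm : Measurable θ) (hθtm : Measurable θt) (hθ : ∀ r, |θ r| ≤ Kθ)
    (hθt : ∀ r, |θt r| ≤ Kt) (hft : Integrable (ft · s)) (hf : Integrable (f · s))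
    (hΦm : Measurable (uncurry Φ)) (hΦ : ∀ x, ∀ r ∈ Ioc a b, |Φ x r| ≤ M) :
    weakRhs θ θt f ft (fun x => ∫ r in a..b, Φ x r) s
      = ∫ r in a..b, weakRhs θ θt f ft (Φ · r) s := by
  have hΦi (x : ℝ) : IntervalIntegrable (Φ x) volume a b :=
    intervalIntegrable_of_abs_le hab hΦm.of_uncurry_left.aestronglyMeasurable (hΦ x)
  have hk : Integrable (collisionKernel θ θt f ft s) := by
    simpa using integrable_collisionKernel_mul (w := fun _ => 1) (Kw := 1) hθm hθtm hθ hθt hft hf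
      aestronglyMeasurable_const fun _ => by simp
  have hDm : Measurable fun z : (ℝ × ℝ) × ℝ => midpointDefect (Φ · z.2) z.1.1 z.1.2 := by
    unfold midpointDefect; fun_prop
  unfold weakRhs
  simp_rw [midpointDefect_intervalIntegral hΦi]
  exact integral_mul_intervalIntegral_comm hab hk hDm.aestronglyMeasurable
    fun p r hr => abs_midpointDefect_le (fun x => hΦ x r hr) p.1 p.2

theorem weakRhs_eq_integral_mul_adjointOp_add {g : ℝ → ℝ → ℝ} {Kg : ℝ}
    (hθm : Measurable θ) (hθtm : Measurable θt) (hθ : ∀ r, |θ r| ≤ Kθ)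
    (hθt : ∀ r, |θt r| ≤ Kt) (hft : Integrable (ft · s)) (hf : Integrable (f · s))
    (hgm : Measurable (g · s)) (hg : ∀ x, |g x s| ≤ Kg) :
    weakRhs θ θt f ft (g · s) s
      = (∫ x, ft x s * adjointOp θ f g x s)
        + ∫ p : ℝ × ℝ, f p.1 s * f p.2 s * (θt (p.1 - p.2) * midpointDefect (g · s) p.1 p.2) := by
  have hDm := (measurable_midpointDefect hgm).aestronglyMeasurable (μ := volume)
  have hD (p : ℝ × ℝ) := abs_midpointDefect_le hg p.1 p.2
  unfold weakRhs
  rw [integral_collisionKernel_mul hθm hθtm hθ hθt hft hf hDm hD, Measure.volume_eq_prod,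
    integral_mul_prod_mul_eq (w := fun p => θ (p.1 - p.2) * midpointDefect (g · s) p.1 p.2) hft hf
      ((hθm.comp (by fun_prop)).aestronglyMeasurable.mul hDm)
      (ae_of_all _ (abs_comp_sub_mul_le hθ hD)), ← integral_const_mul]
  congr 2 with x
  unfold adjointOp
  simp only [← integral_const_mul]
  congr 1 with y
  ring

end WeakRhs

section Duality

variable {θ θt : ℝ → ℝ} {f ft : ℝ → ℝ → ℝ} {T C Kθ Kt : ℝ}

theorem integrableOn_weakRhs {Φ : ℝ → ℝ → ℝ} {M : ℝ} (hθm : Measurable θ)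
    (hθtm : Measurable θt) (hθ : ∀ r, |θ r| ≤ Kθ) (hθt : ∀ r, |θt r| ≤ Kt)
    (hfm : Measurable (uncurry f)) (hftm : Measurable (uncurry ft))
    (hf : ∀ t ∈ Icc 0 T, Integrable (f · t) ∧ ∫ x, |f x t| ≤ C)
    (hft : ∀ t ∈ Icc 0 T, Integrable (ft · t) ∧ ∫ x, |ft x t| ≤ C)
    (hΦm : Measurable (uncurry Φ)) (hΦ : ∀ r ∈ Icc 0 T, ∀ x, |Φ x r| ≤ M) :
    IntegrableOn (uncurry fun s r => weakRhs θ θt f ft (Φ · r) s) (Ioc 0 T ×ˢ Ioc 0 T) := by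
  refine Measure.integrableOn_of_bounded
    ((Metric.isBounded_Ioc 0 T).prod (Metric.isBounded_Ioc 0 T)).measure_lt_top.ne
    (M := (2 * Kθ + Kt) * (4 * M) * C ^ 2)
    (measurable_weakRhs hθm hθtm hfm hftm hΦm).aestronglyMeasurable
    (ae_restrict_of_forall_mem (measurableSet_Ioc.prod measurableSet_Ioc) fun z hz => ?_)
  have hs := Ioc_subset_Icc_self hz.1
  exact abs_weakRhs_le hθm hθtm hθ hθt (hft _ hs).1 (hf _ hs).1 (hft _ hs).2 (hf _ hs).2
    hΦm.of_uncurry_right (hΦ _ (Ioc_subset_Icc_self hz.2))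

theorem integral_mul_eq_intervalIntegral_weakRhs_sub {g L : ℝ → ℝ → ℝ} {Kg M : ℝ} (hT : 0 ≤ T)
    (hθm : Measurable θ) (hθtm : Measurable θt) (hθ : ∀ r, |θ r| ≤ Kθ)
    (hθt : ∀ r, |θt r| ≤ Kt) (hfm : Measurable (uncurry f)) (hftm : Measurable (uncurry ft))
    (hf : ∀ t ∈ Icc 0 T, Integrable (f · t) ∧ ∫ x, |f x t| ≤ C)
    (hft : ∀ t ∈ Icc 0 T, Integrable (ft · t) ∧ ∫ x, |ft x t| ≤ C)
    (hgm : Measurable (uncurry g)) (hg : ∀ x t, |g x t| ≤ Kg)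
    (hLm : Measurable (uncurry L)) (hL : ∀ t ∈ Icc 0 T, ∀ x, |L x t| ≤ M)
    (hweak : ∀ φ : ℝ → ℝ, Measurable φ → (∃ K, ∀ x, |φ x| ≤ K) → ∀ t ∈ Icc 0 T,
      ∫ x, ft x t * φ x = ∫ s in 0..t, weakRhs θ θt f ft φ s)
    (hdual : ∀ x, ∀ t ∈ Icc 0 T, g x t = g x T + ∫ r in t..T, L x r) :
    ∫ x, ft x T * g x T
      = ∫ s in 0..T, (weakRhs θ θt f ft (g · s) s - ∫ x, ft x s * L x s) := by
  have hE := integrableOn_weakRhs hθm hθtm hθ hθt hfm hftm hf hft hLm hL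
  have hstep (s : ℝ) (hs : s ∈ Icc 0 T) : weakRhs θ θt f ft (g · T) s
      = weakRhs θ θt f ft (g · s) s - ∫ r in s..T, weakRhs θ θt f ft (L · r) s := by
    have hdiff : (fun x => ∫ r in s..T, L x r) = fun x => g x s - g x T :=
      funext fun x => by linarith [hdual x s hs]
    rw [← weakRhs_intervalIntegral hs.2 hθm hθtm hθ hθt (hft s hs).1 (hf s hs).1 hLm
      (fun x r hr => hL r ⟨hs.1.trans hr.1.le, hr.2⟩ x), hdiff, ← weakRhs_sub hθm hθtm hθ hθt
      (hft s hs).1 (hf s hs).1 hgm.of_uncurry_right (hg · s) hgm.of_uncurry_right (hg · T)]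
    ring
  have hY : IntervalIntegrable (fun s => weakRhs θ θt f ft (g · s) s) volume 0 T :=
    intervalIntegrable_of_abs_le hT
      ((measurable_weakRhs hθm hθtm hfm hftm hgm).comp
        (measurable_id.prodMk measurable_id)).aestronglyMeasurable
      fun s hs => have hs' := Ioc_subset_Icc_self hs
        abs_weakRhs_le hθm hθtm hθ hθt (hft s hs').1 (hf s hs').1 (hft s hs').2 (hf s hs').2
          hgm.of_uncurry_right (hg · s)
  have hA : IntervalIntegrable (fun s => ∫ x, ft x s * L x s) volume 0 T :=
    intervalIntegrable_integral_of_abs_le hT (by fun_prop) fun s hs =>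
      have hs' := Ioc_subset_Icc_self hs
      (abs_integral_mul_le_of_abs_le (hft s hs').1 (ae_of_all _ (hL s hs'))).trans
        (mul_le_mul_of_nonneg_left (hft s hs').2 ((abs_nonneg _).trans (hL s hs' 0)))
  have hT' : T ∈ Icc 0 T := ⟨hT, le_rfl⟩
  calc ∫ x, ft x T * g x T
      = ∫ s in 0..T, weakRhs θ θt f ft (g · T) s :=
        hweak _ hgm.of_uncurry_right ⟨Kg, (hg · T)⟩ T hT'
    _ = ∫ s in 0..T, (weakRhs θ θt f ft (g · s) s
          - ∫ r in s..T, weakRhs θ θt f ft (L · r) s) :=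
        intervalIntegral.integral_congr fun s hs => hstep s (by rwa [uIcc_of_le hT] at hs)
    _ = (∫ s in 0..T, weakRhs θ θt f ft (g · s) s)
          - ∫ r in 0..T, ∫ s in 0..r, weakRhs θ θt f ft (L · r) s := by
        rw [intervalIntegral.integral_sub hY
          (intervalIntegrable_intervalIntegral_of_integrableOn hT hE),
          intervalIntegral_intervalIntegral_triangle_swap hT hE]
    _ = _ := by
        rw [intervalIntegral.integral_sub hY hA]
        congr 1
        refine intervalIntegral.integral_congr fun r hr => ?_
        have hr' : r ∈ Icc 0 T := by rwa [uIcc_of_le hT] at hr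
        exact (hweak _ hLm.of_uncurry_right ⟨M, hL r hr'⟩ r hr').symm

end Duality

theorem stmt12_general (T a C : ℝ) (hT : 0 < T)
    (θ θt : ℝ → ℝ)
    (hθm : Measurable θ) (hθb : ∃ K, ∀ r, |θ r| ≤ K)
    (hθtm : Measurable θt) (hθtb : ∃ K, ∀ r, |θt r| ≤ K)
    (f ft : ℝ → ℝ → ℝ)
    (hfm : Measurable (Function.uncurry f)) (hftm : Measurable (Function.uncurry ft))
    (hfL1 : ∀ t ∈ Set.Icc (0:ℝ) T,
      Integrable (fun x => f x t) ∧ (∫ x : ℝ, |f x t|) ≤ C)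
    (hftL1 : ∀ t ∈ Set.Icc (0:ℝ) T,
      Integrable (fun x => ft x t) ∧ (∫ x : ℝ, |ft x t|) ≤ C)
    (g : ℝ → ℝ → ℝ)
    (hgm : Measurable (Function.uncurry g)) (hgb : ∃ K, ∀ x t, |g x t| ≤ K)
    -- (H1): integrated weak form of the perturbed equation, tested against
    -- bounded measurable φ.
    (H1 : ∀ φ : ℝ → ℝ, Measurable φ → (∃ K, ∀ x, |φ x| ≤ K) →
      ∀ t ∈ Set.Icc (0:ℝ) T,
        (∫ x : ℝ, ft x t * φ x)
          = ∫ s in (0:ℝ)..t, ∫ p : ℝ × ℝ,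
              (2 * ft p.1 s * f p.2 s * θ (p.1 - p.2)
                + f p.1 s * f p.2 s * θt (p.1 - p.2))
                * (2 * φ ((p.1 + p.2) / 2) - φ p.1 - φ p.2))
    -- (H2): integrated form of the adjoint problem with final condition
    -- `g(·,T) = 𝟙_{(-∞,a]}`.
    (H2 : ∀ x : ℝ, ∀ t ∈ Set.Icc (0:ℝ) T,
      g x t = (if x ≤ a then (1:ℝ) else 0)
        + ∫ s in t..T, ∫ y : ℝ,
            2 * f y s * θ (x - y) * (2 * g ((x + y) / 2) s - g x s - g y s)) :
    (∫ x in Set.Iic a, ft x T)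
      = ∫ s in (0:ℝ)..T, ∫ p : ℝ × ℝ,
          θt (p.1 - p.2) * f p.1 s * f p.2 s
            * (2 * g ((p.1 + p.2) / 2) s - g p.1 s - g p.2 s) := by
  obtain ⟨Kθ, hθ⟩ := hθb
  obtain ⟨Kt, hθt⟩ := hθtb
  obtain ⟨Kg, hg⟩ := hgb
  have hgT (x : ℝ) : g x T = if x ≤ a then 1 else 0 := by
    simpa using H2 x T ⟨hT.le, le_rfl⟩
  have hdual (x t : ℝ) (ht : t ∈ Icc 0 T) : g x t = g x T + ∫ r in t..T, adjointOp θ f g x r := by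
    rw [hgT]; exact H2 x t ht
  calc ∫ x in Iic a, ft x T
      = ∫ x, ft x T * g x T := by
        rw [← integral_indicator measurableSet_Iic]
        congr with x
        simp [hgT, indicator_apply]
    _ = ∫ s in 0..T, (weakRhs θ θt f ft (g · s) s - ∫ x, ft x s * adjointOp θ f g x s) :=
        integral_mul_eq_intervalIntegral_weakRhs_sub hT.le hθm hθtm hθ hθt hfm hftm hfL1 hftL1
          hgm hg (measurable_adjointOp hθm hfm hgm)
          (fun t ht => abs_adjointOp_le (hfL1 t ht).1 (hfL1 t ht).2 hθ (hg · t)) H1 hdual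
    _ = ∫ s in 0..T, ∫ p : ℝ × ℝ,
          f p.1 s * f p.2 s * (θt (p.1 - p.2) * midpointDefect (g · s) p.1 p.2) := by
        refine intervalIntegral.integral_congr fun s hs => ?_
        have hs' : s ∈ Icc 0 T := by rwa [uIcc_of_le hT.le] at hs
        simp only [weakRhs_eq_integral_mul_adjointOp_add hθm hθtm hθ hθt (hftL1 s hs').1
          (hfL1 s hs').1 hgm.of_uncurry_right (hg · s), add_sub_cancel_left]
    _ = _ := by
        congr with s
        congr with p
        unfold midpointDefect
        ring

theorem stmt12 (T a C : ℝ) (hT : 0 < T) (hC : 0 < C)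
    (θ θt : ℝ → ℝ)
    (hθm : Measurable θ) (hθb : ∃ K, ∀ r, |θ r| ≤ K)
    (hθtm : Measurable θt) (hθtb : ∃ K, ∀ r, |θt r| ≤ K)
    (hθe : ∀ r, θ (-r) = θ r)
    (f ft : ℝ → ℝ → ℝ)
    (hfm : Measurable (Function.uncurry f)) (hftm : Measurable (Function.uncurry ft))
    (hfnn : ∀ x t, 0 ≤ f x t)
    (hfL1 : ∀ t ∈ Set.Icc (0:ℝ) T,
      Integrable (fun x => f x t) ∧ (∫ x : ℝ, |f x t|) ≤ C)
    (hftL1 : ∀ t ∈ Set.Icc (0:ℝ) T,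
      Integrable (fun x => ft x t) ∧ (∫ x : ℝ, |ft x t|) ≤ C)
    (g : ℝ → ℝ → ℝ)
    (hgm : Measurable (Function.uncurry g)) (hgb : ∃ K, ∀ x t, |g x t| ≤ K)
    -- (H1): integrated weak form of the perturbed equation, tested against
    -- bounded measurable φ.
    (H1 : ∀ φ : ℝ → ℝ, Measurable φ → (∃ K, ∀ x, |φ x| ≤ K) →
      ∀ t ∈ Set.Icc (0:ℝ) T,
        (∫ x : ℝ, ft x t * φ x)
          = ∫ s in (0:ℝ)..t, ∫ p : ℝ × ℝ,
              (2 * ft p.1 s * f p.2 s * θ (p.1 - p.2)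
                + f p.1 s * f p.2 s * θt (p.1 - p.2))
                * (2 * φ ((p.1 + p.2) / 2) - φ p.1 - φ p.2))
    -- (H2): integrated form of the adjoint problem with final condition
    -- `g(·,T) = 𝟙_{(-∞,a]}`.
    (H2 : ∀ x : ℝ, ∀ t ∈ Set.Icc (0:ℝ) T,
      g x t = (if x ≤ a then (1:ℝ) else 0)
        + ∫ s in t..T, ∫ y : ℝ,
            2 * f y s * θ (x - y) * (2 * g ((x + y) / 2) s - g x s - g y s)) :
    (∫ x in Set.Iic a, ft x T)
      = ∫ s in (0:ℝ)..T, ∫ p : ℝ × ℝ,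
          θt (p.1 - p.2) * f p.1 s * f p.2 s
            * (2 * g ((p.1 + p.2) / 2) s - g p.1 s - g p.2 s) :=
  stmt12_general T a C hT θ θt hθm hθb hθtm hθtb f ft hfm hftm hfL1 hftL1 g hgm hgb H1 H2
end
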